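/- Let φ = (φ₁, φ₂) and ψ = (ψ₁, ψ₂) in ℝ². There exists a unit quaternion q with q·u(2πφ₁)·q⁻¹ = u(2πψ₁), q·u(2πφ₂)·q⁻¹ = u(2πψ₂) and q·j·q⁻¹ = j if and only if there exists θ ∈ ℤ² with (ψ₁, ψ₂) = (φ₁, φ₂) + θ or (ψ₁, ψ₂) = (−φ₁, −φ₂) + θ. (That is, the representations ρ_φ and ρ_ψ are conjugate if and only if φ = ±ψ mod ℤ².) -/

import Mathlib

open Real

/-- The unit quaternion `cos θ + (sin θ) i`. -/
noncomputable def uq (θ : ℝ) : Quaternion ℝ := ⟨Real.cos θ, Real.sin θ, 0, 0⟩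

/-- The quaternion unit `j`. -/
def jq : Quaternion ℝ := ⟨0, 0, 1, 0⟩

@[simp] lemma uq_re (θ : ℝ) : (uq θ).re = Real.cos θ := rfl
@[simp] lemma uq_imI (θ : ℝ) : (uq θ).imI = Real.sin θ := rfl
@[simp] lemma uq_imJ (θ : ℝ) : (uq θ).imJ = 0 := rfl
@[simp] lemma uq_imK (θ : ℝ) : (uq θ).imK = 0 := rfl
@[simp] lemma jq_re : jq.re = 0 := rfl
@[simp] lemma jq_imI : jq.imI = 0 := rfl
@[simp] lemma jq_imJ : jq.imJ = 1 := rfl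
@[simp] lemma jq_imK : jq.imK = 0 := rfl

lemma jq_inv : jq⁻¹ = -jq := by
  apply inv_eq_of_mul_eq_one_right
  ext <;> simp [Quaternion.re_mul, Quaternion.imI_mul, Quaternion.imJ_mul, Quaternion.imK_mul, Quaternion.re_one, Quaternion.imI_one, Quaternion.imJ_one, Quaternion.imK_one]

lemma conj_j (θ : ℝ) : jq * uq θ * jq⁻¹ = uq (-θ) := by
  rw [jq_inv]
  ext <;> simp [Quaternion.re_mul, Quaternion.imI_mul, Quaternion.imJ_mul, Quaternion.imK_mul]

lemma norm_jq : ‖jq‖ = 1 := by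
  have h1 : Quaternion.normSq jq = 1 := by simp [Quaternion.normSq_def']
  have h2 : ‖jq‖ * ‖jq‖ = 1 := by rw [← Quaternion.normSq_eq_norm_mul_self, h1]
  nlinarith [norm_nonneg jq]

lemma uq_period (a : ℝ) (n : ℤ) : uq (2 * π * (a + n)) = uq (2 * π * a) := by
  have h : 2 * π * (a + n) = 2 * π * a + n * (2*π) := by ring
  rw [h]
  unfold uq
  rw [Real.cos_add_int_mul_two_pi, Real.sin_add_int_mul_two_pi]

lemma key (a b : ℝ) (hc : Real.cos (2*π*a) = Real.cos (2*π*b))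
    (hs : Real.sin (2*π*a) = Real.sin (2*π*b)) : ∃ n : ℤ, a = b + n := by
  have h := Real.Angle.cos_sin_inj hc hs
  rw [Real.Angle.angle_eq_iff_two_pi_dvd_sub] at h
  obtain ⟨k, hk⟩ := h
  refine ⟨k, ?_⟩
  have h2 : (2*π) * (a - b) = (2*π) * k := by linarith
  have h3 := mul_left_cancel₀ (by positivity : (2*π : ℝ) ≠ 0) h2
  linarith

lemma key_neg (a b : ℝ) (hc : Real.cos (2*π*a) = Real.cos (2*π*b))
    (hs : Real.sin (2*π*a) = -Real.sin (2*π*b)) : ∃ n : ℤ, a = -b + n := by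
  apply key
  · rw [show 2*π*(-b) = -(2*π*b) by ring, Real.cos_neg]; exact hc
  · rw [show 2*π*(-b) = -(2*π*b) by ring, Real.sin_neg]; exact hs

/-- the representations `ρ_φ` and `ρ_ψ` are conjugate (by a single unit
quaternion taking `u(2πφ₁) ↦ u(2πψ₁)`, `u(2πφ₂) ↦ u(2πψ₂)`, `j ↦ j`) iff
`ψ = φ + θ` or `ψ = -φ + θ` for some `θ ∈ ℤ²`. -/
theorem rho_phi_conjugate_iff (φ₁ φ₂ ψ₁ ψ₂ : ℝ) :
    (∃ q : Quaternion ℝ, ‖q‖ = 1 ∧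
      q * uq (2 * π * φ₁) * q⁻¹ = uq (2 * π * ψ₁) ∧
      q * uq (2 * π * φ₂) * q⁻¹ = uq (2 * π * ψ₂) ∧
      q * jq * q⁻¹ = jq) ↔
    (∃ θ : ℤ × ℤ, (ψ₁ = φ₁ + θ.1 ∧ ψ₂ = φ₂ + θ.2) ∨
      (ψ₁ = -φ₁ + θ.1 ∧ ψ₂ = -φ₂ + θ.2)) := by
  constructor
  · rintro ⟨q, hq, h1, h2, hj⟩
    have hq0 : q ≠ 0 := by intro h; rw [h, norm_zero] at hq; norm_num at hq
    rw [mul_inv_eq_iff_eq_mul₀ hq0] at h1 h2 hj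
    -- q commutes with j : imI = imK = 0
    rw [Quaternion.ext_iff] at hj
    simp [Quaternion.re_mul, Quaternion.imI_mul, Quaternion.imJ_mul, Quaternion.imK_mul] at hj
    have hI : q.imI = 0 := by linarith [hj.2]
    have hK : q.imK = 0 := by linarith [hj.1]
    rw [Quaternion.ext_iff] at h1 h2
    simp [Quaternion.re_mul, Quaternion.imI_mul, Quaternion.imJ_mul, Quaternion.imK_mul,
      hI, hK] at h1 h2
    obtain ⟨a1, b1, c1, d1⟩ := h1
    obtain ⟨a2, b2, c2, d2⟩ := h2
    by_cases ha : q.re ≠ 0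
    · have hc1 : Real.cos (2*π*ψ₁) = Real.cos (2*π*φ₁) :=
        (mul_left_cancel₀ ha (a1.trans (mul_comm _ _))).symm
      have hs1 : Real.sin (2*π*ψ₁) = Real.sin (2*π*φ₁) :=
        (mul_left_cancel₀ ha (b1.trans (mul_comm _ _))).symm
      have hc2 : Real.cos (2*π*ψ₂) = Real.cos (2*π*φ₂) :=
        (mul_left_cancel₀ ha (a2.trans (mul_comm _ _))).symm
      have hs2 : Real.sin (2*π*ψ₂) = Real.sin (2*π*φ₂) :=
        (mul_left_cancel₀ ha (b2.trans (mul_comm _ _))).symm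
      obtain ⟨n1, hn1⟩ := key ψ₁ φ₁ hc1 hs1
      obtain ⟨n2, hn2⟩ := key ψ₂ φ₂ hc2 hs2
      exact ⟨(n1, n2), Or.inl ⟨hn1, hn2⟩⟩
    · push_neg at ha
      have hc : q.imJ ≠ 0 := by
        intro h
        apply hq0
        ext <;> simp [ha, hI, hK, h, Quaternion.re_zero, Quaternion.imI_zero, Quaternion.imJ_zero, Quaternion.imK_zero]
      have hc1 : Real.cos (2*π*ψ₁) = Real.cos (2*π*φ₁) :=
        (mul_left_cancel₀ hc (c1.trans (mul_comm _ _))).symm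
      have hs1 : Real.sin (2*π*ψ₁) = -Real.sin (2*π*φ₁) := by
        have : q.imJ * (-Real.sin (2*π*φ₁)) = q.imJ * Real.sin (2*π*ψ₁) := by
          linear_combination d1
        linarith [mul_left_cancel₀ hc this]
      have hc2 : Real.cos (2*π*ψ₂) = Real.cos (2*π*φ₂) :=
        (mul_left_cancel₀ hc (c2.trans (mul_comm _ _))).symm
      have hs2 : Real.sin (2*π*ψ₂) = -Real.sin (2*π*φ₂) := by
        have : q.imJ * (-Real.sin (2*π*φ₂)) = q.imJ * Real.sin (2*π*ψ₂) := by
          linear_combination d2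
        linarith [mul_left_cancel₀ hc this]
      obtain ⟨n1, hn1⟩ := key_neg ψ₁ φ₁ hc1 hs1
      obtain ⟨n2, hn2⟩ := key_neg ψ₂ φ₂ hc2 hs2
      exact ⟨(n1, n2), Or.inr ⟨hn1, hn2⟩⟩
  · rintro ⟨⟨n1, n2⟩, ⟨h1, h2⟩ | ⟨h1, h2⟩⟩
    · refine ⟨1, norm_one, ?_, ?_, ?_⟩ <;>
        simp [h1, h2, uq_period]
    · refine ⟨jq, norm_jq, ?_, ?_, ?_⟩
      · rw [conj_j, h1, show (-φ₁ + (n1:ℝ)) = (-φ₁ + n1 : ℝ) from rfl, uq_period,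
          show (-(2*π*φ₁) : ℝ) = 2*π*(-φ₁) by ring]
      · rw [conj_j, h2, uq_period, show (-(2*π*φ₂) : ℝ) = 2*π*(-φ₂) by ring]
      · rw [jq_inv]
        ext <;> simp [Quaternion.re_mul, Quaternion.imI_mul, Quaternion.imJ_mul, Quaternion.imK_mul]
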